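/- Let φ: ℝ → ℝ be three times differentiable with φ'' ≥ 0 and |φ'''(t)| ≤ M·φ''(t) for all t and some M ≥ 0 (one-dimensional quasi self-concordance). Then φ(1) ≤ φ(0) + φ'(0) + φ''(0)·(e^M - M - 1)/M². -/

import Mathlib

/-!
Grönwall's inequality applied to `φ''' ≤ M φ''` gives `φ'' t ≤ φ'' 0 · e^{M t}` for `t ≥ 0`.
Comparing `φ` on `[0, 1]` with the function that has the same value and slope at `0` and second
derivative `φ'' 0 · e^{M t}` turns this into the bound, since
`∫₀¹ ∫₀ˢ e^{M t} dt ds = (e^M - M - 1)/M²`.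
-/

open Set Real

lemma le_mul_exp_of_hasDerivAt_le_mul {f f' : ℝ → ℝ} {K a b : ℝ}
    (hf : ∀ x, HasDerivAt f (f' x) x) (bound : ∀ x ∈ Ico a b, f' x ≤ K * f x) :
    ∀ x ∈ Icc a b, f x ≤ f a * exp (K * (x - a)) := by
  intro x hx
  rw [← gronwallBound_ε0]
  refine le_gronwallBound_of_liminf_deriv_right_le
    (fun y _ => (hf y).continuousAt.continuousWithinAt)
    (fun y _ _ hr => (hf y).hasDerivWithinAt.liminf_right_slope_le hr) le_rfl
    (by simpa using bound) x hx

lemma le_of_hasDerivAt_le {f f' g g' : ℝ → ℝ} {a b : ℝ}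
    (hf : ∀ x, HasDerivAt f (f' x) x) (hg : ∀ x, HasDerivAt g (g' x) x)
    (ha : f a ≤ g a) (bound : ∀ x ∈ Ico a b, f' x ≤ g' x) : ∀ x ∈ Icc a b, f x ≤ g x :=
  image_le_of_deriv_right_le_deriv_boundary (fun x _ => (hf x).continuousAt.continuousWithinAt)
    (fun x _ => (hf x).hasDerivWithinAt) ha (fun x _ => (hg x).continuousAt.continuousWithinAt)
    (fun x _ => (hg x).hasDerivWithinAt) bound

lemma le_of_hasDerivAt_hasDerivAt_le {f f' f'' g g' g'' : ℝ → ℝ} {a b : ℝ}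
    (hf : ∀ x, HasDerivAt f (f' x) x) (hf' : ∀ x, HasDerivAt f' (f'' x) x)
    (hg : ∀ x, HasDerivAt g (g' x) x) (hg' : ∀ x, HasDerivAt g' (g'' x) x)
    (ha : f a ≤ g a) (ha' : f' a ≤ g' a) (bound : ∀ x ∈ Ico a b, f'' x ≤ g'' x) :
    ∀ x ∈ Icc a b, f x ≤ g x :=
  le_of_hasDerivAt_le hf hg ha fun x hx =>
    le_of_hasDerivAt_le hf' hg' ha' bound x (Ico_subset_Icc_self hx)

noncomputable def expAntideriv (M t : ℝ) : ℝ :=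
  if M = 0 then t else (exp (M * t) - 1) / M

noncomputable def expAntideriv₂ (M t : ℝ) : ℝ :=
  if M = 0 then t ^ 2 / 2 else (exp (M * t) - M * t - 1) / M ^ 2

lemma hasDerivAt_expAntideriv (M t : ℝ) :
    HasDerivAt (expAntideriv M) (exp (M * t)) t := by
  rcases eq_or_ne M 0 with rfl | hM
  · rw [zero_mul, exp_zero]
    exact (hasDerivAt_id' t).congr_of_eventuallyEq (.of_eq (funext fun _ => if_pos rfl))
  · have h := (((hasDerivAt_id' t).const_mul M).exp.sub_const 1).div_const M
    rw [mul_one, mul_div_cancel_right₀ _ hM] at h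
    exact h.congr_of_eventuallyEq (.of_eq (funext fun _ => if_neg hM))

lemma hasDerivAt_expAntideriv₂ (M t : ℝ) :
    HasDerivAt (expAntideriv₂ M) (expAntideriv M t) t := by
  rcases eq_or_ne M 0 with rfl | hM
  · have h := (hasDerivAt_pow 2 t).div_const 2
    rw [show ((2 : ℕ) : ℝ) * t ^ (2 - 1) / 2 = expAntideriv 0 t by simp [expAntideriv]] at h
    exact h.congr_of_eventuallyEq (.of_eq (funext fun _ => if_pos rfl))
  · have h := ((((hasDerivAt_id' t).const_mul M).exp.sub
      ((hasDerivAt_id' t).const_mul M)).sub_const 1).div_const (M ^ 2)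
    rw [show (exp (M * t) * (M * 1) - M * 1) / M ^ 2 = expAntideriv M t by
      rw [expAntideriv, if_neg hM]; field_simp] at h
    exact h.congr_of_eventuallyEq (.of_eq (funext fun _ => if_neg hM))

theorem stmt11_general (φ φ' φ'' φ''' : ℝ → ℝ) (M : ℝ)
    (hd1 : ∀ t, HasDerivAt φ (φ' t) t)
    (hd2 : ∀ t, HasDerivAt φ' (φ'' t) t)
    (hd3 : ∀ t, HasDerivAt φ'' (φ''' t) t)
    (hqsc : ∀ t, |φ''' t| ≤ M * φ'' t) :
    φ 1 ≤ φ 0 + φ' 0 + φ'' 0 *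
      (if M = 0 then 1 / 2 else (Real.exp M - M - 1) / M ^ 2) := by
  have hφ'' : ∀ t ∈ Icc (0 : ℝ) 1, φ'' t ≤ φ'' 0 * exp (M * t) := fun t ht => by
    simpa using le_mul_exp_of_hasDerivAt_le_mul hd3
      (fun t _ => (le_abs_self _).trans (hqsc t)) t ht
  have hg : ∀ t, HasDerivAt (fun t => φ 0 + φ' 0 * t + φ'' 0 * expAntideriv₂ M t)
      (φ' 0 + φ'' 0 * expAntideriv M t) t := fun t =>
    ((((hasDerivAt_id' t).const_mul (φ' 0)).const_add (φ 0)).add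
      ((hasDerivAt_expAntideriv₂ M t).const_mul (φ'' 0))).congr_deriv (by rw [mul_one])
  have hg' : ∀ t, HasDerivAt (fun t => φ' 0 + φ'' 0 * expAntideriv M t)
      (φ'' 0 * exp (M * t)) t := fun t =>
    ((hasDerivAt_expAntideriv M t).const_mul (φ'' 0)).const_add (φ' 0)
  have hcomp := le_of_hasDerivAt_hasDerivAt_le hd1 hd2 hg hg' (by simp [expAntideriv₂])
    (by simp [expAntideriv]) (fun t ht => hφ'' t (Ico_subset_Icc_self ht)) 1 (by simp)
  simpa [expAntideriv₂] using hcomp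

/-- One-dimensional quasi-self-concordant upper bound (Bach, Prop. 1 on a line):
if `φ'' ≥ 0` and `|φ'''| ≤ M φ''`, then
`φ(1) ≤ φ(0) + φ'(0) + φ''(0)·(e^M - M - 1)/M²`, the factor being `1/2` for `M = 0`. -/
theorem stmt11 (φ φ' φ'' φ''' : ℝ → ℝ) (M : ℝ) (hM : 0 ≤ M)
    (hd1 : ∀ t, HasDerivAt φ (φ' t) t)
    (hd2 : ∀ t, HasDerivAt φ' (φ'' t) t)
    (hd3 : ∀ t, HasDerivAt φ'' (φ''' t) t)
    (hconv : ∀ t, 0 ≤ φ'' t)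
    (hqsc : ∀ t, |φ''' t| ≤ M * φ'' t) :
    φ 1 ≤ φ 0 + φ' 0 + φ'' 0 *
      (if M = 0 then 1 / 2 else (Real.exp M - M - 1) / M ^ 2) :=
  stmt11_general φ φ' φ'' φ''' M hd1 hd2 hd3 hqsc
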